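/- arXiv:1610.05400 — 2 statements merged into one kernel-verified Lean document; each statement's English description precedes it below -/
import Mathlib

section
/- (Proposition 5(i)) Suppose Assumption 1 holds. Then for all γ_r > 0 and γ_c > 0, the matrix S(γ_r, γ_c) = P_Ω + γ_r (I_p ⊗ L_r) + γ_c (L_c ⊗ I_n) is invertible and tr(S(γ_r, γ_c)^{-1}) ≥ R·C, where R and C are the numbers of connected components of the row and column graphs. -/
/-! `xᵀ S x` splits as `‖P_Ω x‖² + γr ∑_c xᵀ_c L_r x_c + γc ∑_i xⁱᵀ L_c xⁱ` over the columns and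
rows of `x`, each Laplacian form being a weighted sum of squared differences along edges. So it
vanishes only if `x` is zero on `Ω` and constant on every block `B_c × A_r`; Assumption 1 puts an
observed entry in every block, hence `S` is positive definite.

For the indicator `u` of a block the Laplacian terms vanish, so `uᵀ S u ≤ uᵀ u = |block|`, and
expanding `(S⁻¹u - u)ᵀ S (S⁻¹u - u) ≥ 0` gives `uᵀ S⁻¹ u ≥ |block|`. Since `2 M_ij ≤ M_ii + M_jj`
for positive semidefinite `M`, also `uᵀ S⁻¹ u ≤ |block| · ∑_{q ∈ block} (S⁻¹)_qq`. Hence the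
diagonal of `S⁻¹` sums to at least `1` over each of the `R·C` blocks. -/

open Matrix BigOperators Finset Kronecker

/-- The weighted graph Laplacian: `L i i = ∑ j, w i j` and `L i j = -(w i j)` for `i ≠ j`. -/
noncomputable def lap {n : ℕ} (w : Fin n → Fin n → ℝ) : Matrix (Fin n) (Fin n) ℝ :=
  Matrix.of fun i j => if i = j then (∑ k, w i k) else -(w i j)

/-- The graph on `Fin n` with `i ~ j` iff `i ≠ j` and `w i j > 0` (for symmetric `w`). -/
def graphOf {n : ℕ} (w : Fin n → Fin n → ℝ) : SimpleGraph (Fin n) :=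
  SimpleGraph.fromRel (fun i j => 0 < w i j)

/-- The 0/1 indicator vector of a subset. -/
noncomputable def chi {n : ℕ} (A : Set (Fin n)) : Fin n → ℝ :=
  A.indicator (fun _ => (1 : ℝ))

/-- The diagonal 0/1 projection matrix `P_Ω`, acting on column-major vectorizations
indexed by `Fin p × Fin n` (first the column index, then the row index). -/
noncomputable def Pmat {n p : ℕ} (Ω : Finset (Fin n × Fin p)) :
    Matrix (Fin p × Fin n) (Fin p × Fin n) ℝ :=
  Matrix.diagonal fun q => if (q.2, q.1) ∈ Ω then (1 : ℝ) else 0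

/-- The matrix `S(γr, γc) = P_Ω + γr (I_p ⊗ L_r) + γc (L_c ⊗ I_n)`. -/
noncomputable def Smat {n p : ℕ} (Ω : Finset (Fin n × Fin p)) (γr γc : ℝ)
    (Lr : Matrix (Fin n) (Fin n) ℝ) (Lc : Matrix (Fin p) (Fin p) ℝ) :
    Matrix (Fin p × Fin n) (Fin p × Fin n) ℝ :=
  Pmat Ω + γr • ((1 : Matrix (Fin p) (Fin p) ℝ) ⊗ₖ Lr)
    + γc • (Lc ⊗ₖ (1 : Matrix (Fin n) (Fin n) ℝ))

section Laplacian

variable {n : ℕ} {w : Fin n → Fin n → ℝ}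

lemma lap_mulVec_apply (hdiag : ∀ i, w i i = 0) (x : Fin n → ℝ) (i : Fin n) :
    (lap w *ᵥ x) i = ∑ j, w i j * (x i - x j) := by
  have hentry : ∀ j, lap w i j = (if i = j then ∑ k, w i k else 0) - w i j := by
    intro j
    by_cases h : i = j
    · simp [lap, h, hdiag]
    · simp [lap, h]
  simp only [mulVec, dotProduct, hentry, sub_mul, ite_mul, zero_mul, Finset.sum_sub_distrib,
    Finset.sum_ite_eq, Finset.mem_univ, if_true, Finset.sum_mul, mul_sub]

lemma dotProduct_lap_mulVec (hsymm : ∀ i j, w i j = w j i) (hdiag : ∀ i, w i i = 0)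
    (x : Fin n → ℝ) :
    x ⬝ᵥ (lap w *ᵥ x) = (∑ i, ∑ j, w i j * (x i - x j) ^ 2) / 2 := by
  have hform : x ⬝ᵥ (lap w *ᵥ x) = ∑ i, ∑ j, w i j * (x i * (x i - x j)) := by
    simp only [dotProduct, lap_mulVec_apply hdiag, Finset.mul_sum]
    exact Finset.sum_congr rfl fun i _ => Finset.sum_congr rfl fun j _ => by ring
  have hswap : x ⬝ᵥ (lap w *ᵥ x) = ∑ i, ∑ j, w i j * (x j * (x j - x i)) := by
    rw [hform, Finset.sum_comm]
    exact Finset.sum_congr rfl fun i _ => Finset.sum_congr rfl fun j _ => by rw [hsymm]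
  have hsq : ∑ i, ∑ j, w i j * (x i - x j) ^ 2
      = ∑ i, ∑ j, w i j * (x i * (x i - x j)) + ∑ i, ∑ j, w i j * (x j * (x j - x i)) := by
    simp only [← Finset.sum_add_distrib]
    exact Finset.sum_congr rfl fun i _ => Finset.sum_congr rfl fun j _ => by ring
  linarith

lemma dotProduct_lap_mulVec_nonneg (hsymm : ∀ i j, w i j = w j i) (hnonneg : ∀ i j, 0 ≤ w i j)
    (hdiag : ∀ i, w i i = 0) (x : Fin n → ℝ) : 0 ≤ x ⬝ᵥ (lap w *ᵥ x) := by
  rw [dotProduct_lap_mulVec hsymm hdiag]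
  exact div_nonneg (Finset.sum_nonneg fun i _ => Finset.sum_nonneg fun j _ =>
    mul_nonneg (hnonneg i j) (sq_nonneg _)) zero_le_two

lemma dotProduct_lap_mulVec_eq_zero_iff (hsymm : ∀ i j, w i j = w j i)
    (hnonneg : ∀ i j, 0 ≤ w i j) (hdiag : ∀ i, w i i = 0) (x : Fin n → ℝ) :
    x ⬝ᵥ (lap w *ᵥ x) = 0 ↔ ∀ i j, 0 < w i j → x i = x j := by
  have hterm : ∀ i j, 0 ≤ w i j * (x i - x j) ^ 2 := fun i j =>
    mul_nonneg (hnonneg i j) (sq_nonneg _)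
  rw [dotProduct_lap_mulVec hsymm hdiag, div_eq_zero_iff, or_iff_left two_ne_zero,
    Finset.sum_eq_zero_iff_of_nonneg fun i _ => Finset.sum_nonneg fun j _ => hterm i j]
  simp only [Finset.mem_univ, forall_const,
    Finset.sum_eq_zero_iff_of_nonneg fun j _ => hterm _ j, mul_eq_zero, sq_eq_zero_iff,
    sub_eq_zero]
  exact forall₂_congr fun i j => ⟨fun h hw => h.resolve_left hw.ne',
    fun h => (hnonneg i j).eq_or_lt.imp Eq.symm h⟩

lemma lap_isHermitian (hsymm : ∀ i j, w i j = w j i) : (lap w).IsHermitian := by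
  ext i j
  by_cases h : i = j
  · simp [lap, h]
  · simp [lap, h, Ne.symm h, hsymm i j]

lemma connectedComponentMk_graphOf_eq {i j : Fin n} (h : 0 < w i j) :
    (graphOf w).connectedComponentMk i = (graphOf w).connectedComponentMk j := by
  by_cases hij : i = j
  · rw [hij]
  · exact SimpleGraph.ConnectedComponent.connectedComponentMk_eq_of_adj
      ((SimpleGraph.fromRel_adj _ _ _).2 ⟨hij, Or.inl h⟩)

lemma eq_of_connectedComponentMk_graphOf_eq {α : Type*} {x : Fin n → α}
    (hx : ∀ i j, 0 < w i j → x i = x j) {i j : Fin n}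
    (h : (graphOf w).connectedComponentMk i = (graphOf w).connectedComponentMk j) :
    x i = x j := by
  have hr := SimpleGraph.ConnectedComponent.exact h
  rw [SimpleGraph.reachable_iff_reflTransGen] at hr
  clear h
  induction hr with
  | refl => rfl
  | tail _ hadj ih =>
    obtain ⟨-, hw | hw⟩ := (SimpleGraph.fromRel_adj _ _ _).1 hadj
    · exact ih.trans (hx _ _ hw)
    · exact ih.trans (hx _ _ hw).symm

end Laplacian

namespace Matrix

variable {ι : Type*} [Fintype ι]

lemma PosSemidef.two_mul_apply_le {M : Matrix ι ι ℝ} (hM : M.PosSemidef) (i j : ι) :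
    2 * M i j ≤ M i i + M j j := by
  classical
  have hsymm : M j i = M i j := by simpa using (congrFun (congrFun hM.isHermitian j) i).symm
  have h := hM.dotProduct_mulVec_nonneg (Pi.single i 1 - Pi.single j 1)
  simp only [star_trivial, mulVec_sub, mulVec_single_one, sub_dotProduct, dotProduct_sub,
    single_dotProduct, one_mul, col_apply] at h
  linarith

lemma PosSemidef.sum_sum_le_card_mul_sum_diag {M : Matrix ι ι ℝ} (hM : M.PosSemidef)
    (D : Finset ι) : ∑ i ∈ D, ∑ j ∈ D, M i j ≤ #D * ∑ i ∈ D, M i i := by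
  have h : 2 * ∑ i ∈ D, ∑ j ∈ D, M i j ≤ ∑ i ∈ D, ∑ j ∈ D, (M i i + M j j) := by
    rw [Finset.mul_sum]
    exact Finset.sum_le_sum fun i _ => by
      rw [Finset.mul_sum]; exact Finset.sum_le_sum fun j _ => hM.two_mul_apply_le i j
  simp only [Finset.sum_add_distrib, Finset.sum_const, nsmul_eq_mul, ← Finset.mul_sum] at h
  linarith

lemma indicator_dotProduct_mulVec_indicator (M : Matrix ι ι ℝ) (D : Finset ι) :
    (D : Set ι).indicator 1 ⬝ᵥ (M *ᵥ (D : Set ι).indicator 1) = ∑ i ∈ D, ∑ j ∈ D, M i j := by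
  classical
  simp [dotProduct, mulVec, Set.indicator_apply, Finset.sum_ite_mem]

lemma indicator_dotProduct_indicator (D : Finset ι) :
    (D : Set ι).indicator (1 : ι → ℝ) ⬝ᵥ (D : Set ι).indicator 1 = #D := by
  classical
  simp [dotProduct, Set.indicator_apply, Finset.sum_ite_mem]

variable [DecidableEq ι]

lemma PosDef.two_mul_dotProduct_sub_le {S : Matrix ι ι ℝ} (hS : S.PosDef) (u : ι → ℝ) :
    2 * (u ⬝ᵥ u) - u ⬝ᵥ (S *ᵥ u) ≤ u ⬝ᵥ (S⁻¹ *ᵥ u) := by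
  have hSinv : S *ᵥ (S⁻¹ *ᵥ u) = u := by
    rw [mulVec_mulVec, mul_nonsing_inv _ ((isUnit_iff_isUnit_det S).1 hS.isUnit), one_mulVec]
  have hST : Sᵀ = S := by
    simpa [conjTranspose_eq_transpose_of_trivial] using hS.isHermitian.eq
  have hswap : (S⁻¹ *ᵥ u) ⬝ᵥ (S *ᵥ u) = u ⬝ᵥ u := by
    rw [dotProduct_mulVec, ← mulVec_transpose, hST, hSinv]
  have h := hS.posSemidef.dotProduct_mulVec_nonneg (S⁻¹ *ᵥ u - u)
  simp only [star_trivial, mulVec_sub, hSinv, sub_dotProduct, dotProduct_sub, hswap] at h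
  rw [dotProduct_comm u (S⁻¹ *ᵥ u)]
  linarith

lemma PosDef.one_le_sum_diag_inv {S : Matrix ι ι ℝ} (hS : S.PosDef) {D : Finset ι}
    (hD : D.Nonempty)
    (hSD : (D : Set ι).indicator 1 ⬝ᵥ (S *ᵥ (D : Set ι).indicator 1) ≤ #D) :
    1 ≤ ∑ i ∈ D, S⁻¹ i i := by
  have hcard : (0 : ℝ) < #D := by exact_mod_cast hD.card_pos
  have h := hS.two_mul_dotProduct_sub_le ((D : Set ι).indicator 1)
  rw [indicator_dotProduct_indicator, indicator_dotProduct_mulVec_indicator,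
    indicator_dotProduct_mulVec_indicator] at h
  rw [indicator_dotProduct_mulVec_indicator] at hSD
  have hdiag := hS.inv.posSemidef.sum_sum_le_card_mul_sum_diag D
  exact le_of_mul_le_mul_left (by linarith) hcard

end Matrix

section Kronecker

variable {R l m : Type*} [CommSemiring R] [Fintype l] [Fintype m]

lemma dotProduct_one_kronecker_mulVec [DecidableEq l] (M : Matrix m m R) (x : l × m → R) :
    x ⬝ᵥ ((1 ⊗ₖ M) *ᵥ x) = ∑ c, (fun i => x (c, i)) ⬝ᵥ (M *ᵥ fun i => x (c, i)) := by
  simp [dotProduct, mulVec, kroneckerMap_apply, one_apply, Fintype.sum_prod_type, ite_mul]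

lemma dotProduct_kronecker_one_mulVec [DecidableEq m] (M : Matrix l l R) (x : l × m → R) :
    x ⬝ᵥ ((M ⊗ₖ 1) *ᵥ x) = ∑ i, (fun c => x (c, i)) ⬝ᵥ (M *ᵥ fun c => x (c, i)) := by
  simp [dotProduct, mulVec, kroneckerMap_apply, one_apply, Fintype.sum_prod_type_right, mul_ite]

end Kronecker

section Smat

variable {n p : ℕ} (Ω : Finset (Fin n × Fin p))

lemma dotProduct_Pmat_mulVec (x : Fin p × Fin n → ℝ) :
    x ⬝ᵥ (Pmat Ω *ᵥ x) = ∑ q with (q.2, q.1) ∈ Ω, x q ^ 2 := by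
  simp [Pmat, dotProduct, mulVec_diagonal, Finset.sum_filter, sq]

lemma dotProduct_Pmat_mulVec_nonneg (x : Fin p × Fin n → ℝ) : 0 ≤ x ⬝ᵥ (Pmat Ω *ᵥ x) := by
  rw [dotProduct_Pmat_mulVec]
  positivity

lemma dotProduct_Pmat_mulVec_le (x : Fin p × Fin n → ℝ) : x ⬝ᵥ (Pmat Ω *ᵥ x) ≤ x ⬝ᵥ x := by
  rw [dotProduct_Pmat_mulVec]
  calc ∑ q with (q.2, q.1) ∈ Ω, x q ^ 2 ≤ ∑ q, x q ^ 2 :=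
        Finset.sum_le_sum_of_subset_of_nonneg (Finset.filter_subset _ _) fun q _ _ => sq_nonneg _
    _ = x ⬝ᵥ x := by simp only [dotProduct, sq]

lemma dotProduct_Pmat_mulVec_eq_zero_iff (x : Fin p × Fin n → ℝ) :
    x ⬝ᵥ (Pmat Ω *ᵥ x) = 0 ↔ ∀ q ∈ Ω, x (q.2, q.1) = 0 := by
  rw [dotProduct_Pmat_mulVec, Finset.sum_eq_zero_iff_of_nonneg fun q _ => sq_nonneg _]
  simpa using forall_comm

variable (γr γc : ℝ)

lemma dotProduct_Smat_mulVec (Lr : Matrix (Fin n) (Fin n) ℝ) (Lc : Matrix (Fin p) (Fin p) ℝ)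
    (x : Fin p × Fin n → ℝ) :
    x ⬝ᵥ (Smat Ω γr γc Lr Lc *ᵥ x) = x ⬝ᵥ (Pmat Ω *ᵥ x)
      + γr * ∑ c, (fun i => x (c, i)) ⬝ᵥ (Lr *ᵥ fun i => x (c, i))
      + γc * ∑ i, (fun c => x (c, i)) ⬝ᵥ (Lc *ᵥ fun c => x (c, i)) := by
  simp only [Smat, add_mulVec, dotProduct_add, smul_mulVec, dotProduct_smul, smul_eq_mul,
    dotProduct_one_kronecker_mulVec, dotProduct_kronecker_one_mulVec]

lemma Smat_isHermitian {Lr : Matrix (Fin n) (Fin n) ℝ} {Lc : Matrix (Fin p) (Fin p) ℝ}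
    (hLr : Lr.IsHermitian) (hLc : Lc.IsHermitian) : (Smat Ω γr γc Lr Lc).IsHermitian := by
  refine ((isHermitian_diagonal _).add ?_).add ?_
  · rw [IsHermitian, conjTranspose_smul, conjTranspose_kronecker, conjTranspose_one, hLr.eq,
      star_trivial]
  · rw [IsHermitian, conjTranspose_smul, conjTranspose_kronecker, conjTranspose_one, hLc.eq,
      star_trivial]

end Smat

section Components

variable {n p : ℕ} (Ω : Finset (Fin n × Fin p)) {w : Fin n → Fin n → ℝ}
  {wt : Fin p → Fin p → ℝ}

lemma eq_zero_of_forall_mem_eq_zero {α : Type*} [Zero α] (x : Fin p × Fin n → α)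
    (hΩ : ∀ q ∈ Ω, x (q.2, q.1) = 0)
    (hrow : ∀ c i j, 0 < w i j → x (c, i) = x (c, j))
    (hcol : ∀ i c d, 0 < wt c d → x (c, i) = x (d, i))
    (hobs : ∀ (a : (graphOf w).ConnectedComponent) (b : (graphOf wt).ConnectedComponent),
      ∃ q ∈ Ω, (graphOf w).connectedComponentMk q.1 = a ∧
        (graphOf wt).connectedComponentMk q.2 = b) :
    x = 0 := by
  funext ⟨c, i⟩
  obtain ⟨q, hq, hq₁, hq₂⟩ := hobs ((graphOf w).connectedComponentMk i)
    ((graphOf wt).connectedComponentMk c)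
  calc x (c, i) = x (c, q.1) := eq_of_connectedComponentMk_graphOf_eq (hrow c) hq₁.symm
    _ = x (q.2, q.1) :=
      eq_of_connectedComponentMk_graphOf_eq (x := fun d => x (d, q.1)) (hcol q.1) hq₂.symm
    _ = 0 := hΩ q hq

variable {γr γc : ℝ}

theorem Smat_posDef (hγr : 0 < γr) (hγc : 0 < γc)
    (hsymm : ∀ i j, w i j = w j i) (hnonneg : ∀ i j, 0 ≤ w i j) (hdiag : ∀ i, w i i = 0)
    (hsymm' : ∀ i j, wt i j = wt j i) (hnonneg' : ∀ i j, 0 ≤ wt i j)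
    (hdiag' : ∀ i, wt i i = 0)
    (hobs : ∀ (a : (graphOf w).ConnectedComponent) (b : (graphOf wt).ConnectedComponent),
      ∃ q ∈ Ω, (graphOf w).connectedComponentMk q.1 = a ∧
        (graphOf wt).connectedComponentMk q.2 = b) :
    (Smat Ω γr γc (lap w) (lap wt)).PosDef := by
  refine PosDef.of_dotProduct_mulVec_pos
    (Smat_isHermitian Ω γr γc (lap_isHermitian hsymm) (lap_isHermitian hsymm')) fun x hx => ?_
  rw [star_trivial, dotProduct_Smat_mulVec]
  have hP := dotProduct_Pmat_mulVec_nonneg Ω x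
  have hrow c := dotProduct_lap_mulVec_nonneg hsymm hnonneg hdiag fun i => x (c, i)
  have hcol i := dotProduct_lap_mulVec_nonneg hsymm' hnonneg' hdiag' fun c => x (c, i)
  have hrows := Finset.sum_nonneg fun c (_ : c ∈ Finset.univ) => hrow c
  have hcols := Finset.sum_nonneg fun i (_ : i ∈ Finset.univ) => hcol i
  refine lt_of_le_of_ne (by positivity) fun h0 => hx ?_
  have hP0 : x ⬝ᵥ (Pmat Ω *ᵥ x) = 0 := by nlinarith
  have hrows0 := (Finset.sum_eq_zero_iff_of_nonneg fun c _ => hrow c).1 (by nlinarith)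
  have hcols0 := (Finset.sum_eq_zero_iff_of_nonneg fun i _ => hcol i).1 (by nlinarith)
  refine eq_zero_of_forall_mem_eq_zero Ω x ((dotProduct_Pmat_mulVec_eq_zero_iff Ω x).1 hP0)
    (fun c => ?_) (fun i => ?_) hobs
  · exact (dotProduct_lap_mulVec_eq_zero_iff hsymm hnonneg hdiag _).1 (hrows0 c (mem_univ c))
  · exact (dotProduct_lap_mulVec_eq_zero_iff hsymm' hnonneg' hdiag' _).1 (hcols0 i (mem_univ i))

lemma indicator_dotProduct_Smat_mulVec_indicator_le
    (hsymm : ∀ i j, w i j = w j i) (hnonneg : ∀ i j, 0 ≤ w i j) (hdiag : ∀ i, w i i = 0)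
    (hsymm' : ∀ i j, wt i j = wt j i) (hnonneg' : ∀ i j, 0 ≤ wt i j)
    (hdiag' : ∀ i, wt i i = 0) (D : Finset (Fin p × Fin n))
    (hrow : ∀ c i j, 0 < w i j → ((c, i) ∈ D ↔ (c, j) ∈ D))
    (hcol : ∀ i c d, 0 < wt c d → ((c, i) ∈ D ↔ (d, i) ∈ D)) :
    (D : Set (Fin p × Fin n)).indicator 1 ⬝ᵥ
      (Smat Ω γr γc (lap w) (lap wt) *ᵥ (D : Set (Fin p × Fin n)).indicator 1) ≤ #D := by
  classical
  have hrow0 c : (fun i => (D : Set (Fin p × Fin n)).indicator 1 (c, i)) ⬝ᵥ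
      (lap w *ᵥ fun i => (D : Set (Fin p × Fin n)).indicator 1 (c, i)) = 0 :=
    (dotProduct_lap_mulVec_eq_zero_iff hsymm hnonneg hdiag _).2 fun i j h => by
      simp [Set.indicator_apply, hrow c i j h]
  have hcol0 i : (fun c => (D : Set (Fin p × Fin n)).indicator 1 (c, i)) ⬝ᵥ
      (lap wt *ᵥ fun c => (D : Set (Fin p × Fin n)).indicator 1 (c, i)) = 0 :=
    (dotProduct_lap_mulVec_eq_zero_iff hsymm' hnonneg' hdiag' _).2 fun c d h => by
      simp [Set.indicator_apply, hcol i c d h]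
  rw [dotProduct_Smat_mulVec, Finset.sum_eq_zero fun c _ => hrow0 c,
    Finset.sum_eq_zero fun i _ => hcol0 i, mul_zero, mul_zero, add_zero, add_zero,
    ← indicator_dotProduct_indicator]
  exact dotProduct_Pmat_mulVec_le Ω _

end Components

/-- Proposition 5(i): under Assumption 1 and `γr, γc > 0`, `S(γr, γc)` is
invertible and `tr(S(γr, γc)⁻¹) ≥ R·C`. -/
theorem dof_lower_bound {n p R C : ℕ} (Ω : Finset (Fin n × Fin p))
    (γr γc : ℝ) (hγr : 0 < γr) (hγc : 0 < γc)
    (w : Fin n → Fin n → ℝ) (wt : Fin p → Fin p → ℝ)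
    (hsymm : ∀ i j, w i j = w j i) (hnonneg : ∀ i j, 0 ≤ w i j)
    (hdiag : ∀ i, w i i = 0)
    (hsymm' : ∀ i j, wt i j = wt j i) (hnonneg' : ∀ i j, 0 ≤ wt i j)
    (hdiag' : ∀ i, wt i i = 0)
    (A : Fin R → Set (Fin n))
    (eA : (graphOf w).ConnectedComponent ≃ Fin R)
    (hA : ∀ r, A r = {v | eA ((graphOf w).connectedComponentMk v) = r})
    (B : Fin C → Set (Fin p))
    (eB : (graphOf wt).ConnectedComponent ≃ Fin C)
    (hB : ∀ c, B c = {v | eB ((graphOf wt).connectedComponentMk v) = c})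
    (hobs : ∀ r c, ∃ q ∈ Ω, q.1 ∈ A r ∧ q.2 ∈ B c) :
    IsUnit (Smat Ω γr γc (lap w) (lap wt)) ∧
    ((R : ℝ) * (C : ℝ)) ≤ ((Smat Ω γr γc (lap w) (lap wt))⁻¹).trace := by
  classical
  simp only [hA, hB, Set.mem_ofPred_eq] at hobs
  have hS := Smat_posDef Ω hγr hγc hsymm hnonneg hdiag hsymm' hnonneg' hdiag' fun a b => by
    simpa using hobs (eA a) (eB b)
  refine ⟨hS.isUnit, ?_⟩
  let block (k : Fin R × Fin C) : Finset (Fin p × Fin n) :=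
    {q | (eA ((graphOf w).connectedComponentMk q.2),
      eB ((graphOf wt).connectedComponentMk q.1)) = k}
  have hblock k : 1 ≤ ∑ q ∈ block k, (Smat Ω γr γc (lap w) (lap wt))⁻¹ q q := by
    refine hS.one_le_sum_diag_inv ?_ <|
      indicator_dotProduct_Smat_mulVec_indicator_le Ω hsymm hnonneg hdiag hsymm' hnonneg' hdiag'
        (block k) (fun c i j h => ?_) (fun i c d h => ?_)
    · obtain ⟨q, -, hq₁, hq₂⟩ := hobs k.1 k.2
      exact ⟨(q.2, q.1), by simp [block, hq₁, hq₂]⟩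
    · simp [block, connectedComponentMk_graphOf_eq h]
    · simp [block, connectedComponentMk_graphOf_eq h]
  calc ((R : ℝ) * (C : ℝ)) = ∑ k : Fin R × Fin C, 1 := by simp
    _ ≤ ∑ k, ∑ q ∈ block k, (Smat Ω γr γc (lap w) (lap wt))⁻¹ q q :=
      Finset.sum_le_sum fun k _ => hblock k
    _ = _ := Finset.sum_fiberwise _ _ _
end

section
/- (Variance of the Hutchinson estimator with Rademacher samples) Let w be an ℝ^m-valued random vector whose coordinates w_1, …, w_m are independent Rademacher random variables (taking values +1 and −1 each with probability 1/2), and let M ∈ ℝ^{m×m} be a symmetric matrix. Then Var(w^T M w) = 2(‖M‖_F² − Σ_{j=1}^m M_{jj}²), where ‖M‖_F² = Σ_{i,j} M_{ij}². -/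
open MeasureTheory ProbabilityTheory Matrix BigOperators

lemma hutch_aux_int {Ωs : Type*} [MeasureSpace Ωs] [IsProbabilityMeasure (volume : Measure Ωs)]
    {f : Ωs → ℝ} (hm : Measurable f) (hv : ∀ ω, f ω = 1 ∨ f ω = -1) :
    Integrable f (volume : Measure Ωs) :=
  ⟨hm.aestronglyMeasurable, HasFiniteIntegral.of_bounded (C := 1)
    (ae_of_all _ fun ω => by rcases hv ω with h | h <;> simp [h])⟩

lemma hutch_aux_mean_zero {Ωs : Type*} [MeasureSpace Ωs]
    [IsProbabilityMeasure (volume : Measure Ωs)]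
    {f : Ωs → ℝ} (hm : Measurable f) (hv : ∀ ω, f ω = 1 ∨ f ω = -1)
    (hh : (volume : Measure Ωs) {ω | f ω = 1} = 1/2) : ∫ ω, f ω = 0 := by
  have hA : MeasurableSet {ω | f ω = 1} := hm (measurableSet_singleton 1)
  have heq : f = fun ω => 2 * Set.indicator {ω | f ω = 1} (fun _ => (1:ℝ)) ω - 1 := by
    funext ω
    by_cases h : f ω = 1
    · simp [Set.indicator_of_mem, h, Set.mem_setOf_eq]
      norm_num
    · rcases hv ω with h1 | h1
      · exact absurd h1 h
      · rw [h1]; rw [Set.indicator_of_notMem (by simp [Set.mem_setOf_eq, h1]; norm_num)]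
        norm_num
  have hind : Integrable (Set.indicator {ω | f ω = 1} (fun _ => (1:ℝ)))
      (volume : Measure Ωs) := (integrable_const (1:ℝ)).indicator hA
  rw [heq, integral_sub (hind.const_mul 2) (integrable_const 1), integral_const_mul]
  have h1 : ∫ ω, Set.indicator {ω | f ω = 1} (fun _ => (1:ℝ)) ω = ((volume : Measure Ωs) {ω | f ω = 1}).toReal := by
    exact integral_indicator_one hA
  rw [h1, hh]
  simp [measure_univ]


/-- variance of the Hutchinson estimator with Rademacher samples: if the
coordinates of `w` are independent Rademacher random variables and `M` is symmetric, then
`Var(wᵀ M w) = 2(‖M‖_F² − ∑ j M_{jj}²)`. -/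
theorem hutchinson_variance_rademacher {m : ℕ} {Ωs : Type*} [MeasureSpace Ωs]
    [IsProbabilityMeasure (volume : Measure Ωs)]
    (w : Fin m → Ωs → ℝ)
    (hmeas : ∀ i, Measurable (w i))
    (hindep : iIndepFun w (volume : Measure Ωs))
    (hvals : ∀ i ω, w i ω = 1 ∨ w i ω = -1)
    (hhalf : ∀ i, (volume : Measure Ωs) {ω | w i ω = 1} = 1 / 2)
    (M : Matrix (Fin m) (Fin m) ℝ) (hM : M.IsSymm) :
    ∫ ω, ((∑ i, ∑ j, w i ω * M i j * w j ω)
        - ∫ ω', (∑ i, ∑ j, w i ω' * M i j * w j ω')) ^ 2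
      = 2 * ((∑ i, ∑ j, (M i j) ^ 2) - ∑ j, (M j j) ^ 2) := by
  have hsq : ∀ i ω, w i ω * w i ω = 1 := fun i ω => by
    rcases hvals i ω with h | h <;> rw [h] <;> norm_num
  have hw_int : ∀ i, Integrable (w i) (volume : Measure Ωs) :=
    fun i => hutch_aux_int (hmeas i) (hvals i)
  have hvals2 : ∀ i j ω, w i ω * w j ω = 1 ∨ w i ω * w j ω = -1 := by
    intro i j ω
    rcases hvals i ω with h | h <;> rcases hvals j ω with h' | h' <;> rw [h, h'] <;> norm_num
  have hg_int : ∀ i j, Integrable (fun ω => w i ω * w j ω) (volume : Measure Ωs) :=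
    fun i j => hutch_aux_int ((hmeas i).mul (hmeas j)) (hvals2 i j)
  have hg4_int : ∀ i j k l,
      Integrable (fun ω => w i ω * w j ω * (w k ω * w l ω)) (volume : Measure Ωs) := by
    intro i j k l
    refine hutch_aux_int (((hmeas i).mul (hmeas j)).mul ((hmeas k).mul (hmeas l))) ?_
    intro ω
    rcases hvals2 i j ω with h | h <;> rcases hvals2 k l ω with h' | h' <;> rw [h, h'] <;> norm_num
  have hmean : ∀ i, ∫ ω, w i ω = 0 :=
    fun i => hutch_aux_mean_zero (hmeas i) (hvals i) (hhalf i)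
  have hpair : ∀ i j, i ≠ j → ∫ ω, w i ω * w j ω = 0 := by
    intro i j hij
    have h := (hindep.indepFun hij).integral_mul_eq_mul_integral (hw_int i).aestronglyMeasurable (hw_int j).aestronglyMeasurable
    calc ∫ ω, w i ω * w j ω = ∫ ω, (w i * w j) ω := rfl
      _ = (∫ ω, w i ω) * ∫ ω, w j ω := h
      _ = 0 := by rw [hmean i, hmean j]; ring
  set P := (Finset.univ : Finset (Fin m)).offDiag with hP
  set S : Ωs → ℝ := fun ω => ∑ p ∈ P, M p.1 p.2 * (w p.1 ω * w p.2 ω) with hS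
  have hS_int : Integrable S (volume : Measure Ωs) :=
    integrable_finset_sum _ fun p _ => (hg_int p.1 p.2).const_mul _
  -- Step 1: pointwise decomposition
  have step0 : ∀ ω, (∑ i, ∑ j, w i ω * M i j * w j ω) = (∑ j, M j j) + S ω := by
    intro ω
    rw [← Finset.sum_product' (f := fun i j => w i ω * M i j * w j ω),
      ← Finset.diag_union_offDiag, Finset.sum_union (Finset.disjoint_diag_offDiag _),
      Finset.sum_diag]
    congr 1
    · refine Finset.sum_congr rfl fun i _ => ?_
      linear_combination (M i i) * hsq i ω
    · exact Finset.sum_congr rfl fun p _ => by ring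
  -- Step 2: mean of S is 0
  have hES : ∫ ω, S ω = 0 := by
    rw [hS]
    rw [integral_finset_sum _ fun p _ => (hg_int p.1 p.2).const_mul _]
    refine Finset.sum_eq_zero fun p hp => ?_
    rw [integral_const_mul, hpair p.1 p.2 (Finset.mem_offDiag.mp hp).2.2]
    ring
  have hEf : ∫ ω, (∑ i, ∑ j, w i ω * M i j * w j ω) = ∑ j, M j j := by
    simp_rw [step0]
    rw [integral_add (integrable_const _) hS_int, integral_const, hES]
    simp [measure_univ]
  -- Step 3: the fourth-moment computation
  have hE4 : ∀ p ∈ P, ∀ q ∈ P,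
      ∫ ω, (w p.1 ω * w p.2 ω) * (w q.1 ω * w q.2 ω)
        = if q = p ∨ q = Prod.swap p then 1 else 0 := by
    rintro ⟨i, j⟩ hp ⟨k, l⟩ hq
    have hij : i ≠ j := (Finset.mem_offDiag.mp hp).2.2
    have hkl : k ≠ l := (Finset.mem_offDiag.mp hq).2.2
    by_cases hcase : ((k, l) : Fin m × Fin m) = (i, j) ∨ ((k, l) : Fin m × Fin m) = Prod.swap (i, j)
    · rw [if_pos hcase]
      rcases hcase with h | h
      · rw [Prod.mk.injEq] at h
        obtain ⟨h1, h2⟩ := h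
        have hprod : ∀ ω, (w i ω * w j ω) * (w k ω * w l ω) = 1 := by
          intro ω
          rw [h1, h2]
          calc (w i ω * w j ω) * (w i ω * w j ω) = (w i ω * w i ω) * (w j ω * w j ω) := by ring
            _ = 1 := by rw [hsq, hsq]; ring
        simp_rw [hprod]
        simp [measure_univ]
      · simp only [Prod.swap_prod_mk, Prod.mk.injEq] at h
        obtain ⟨h1, h2⟩ := h
        have hprod : ∀ ω, (w i ω * w j ω) * (w k ω * w l ω) = 1 := by
          intro ω
          rw [h1, h2]
          calc (w i ω * w j ω) * (w j ω * w i ω) = (w i ω * w i ω) * (w j ω * w j ω) := by ring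
            _ = 1 := by rw [hsq, hsq]; ring
        simp_rw [hprod]
        simp [measure_univ]
    · rw [if_neg hcase]
      push_neg at hcase
      obtain ⟨hc1, hc2⟩ := hcase
      simp only [ne_eq, Prod.swap_prod_mk, Prod.mk.injEq, not_and] at hc1 hc2
      by_cases hik : i = k
      · have : ∀ ω, (w i ω * w j ω) * (w k ω * w l ω) = w j ω * w l ω := by
          intro ω
          rw [← hik]
          calc (w i ω * w j ω) * (w i ω * w l ω) = (w i ω * w i ω) * (w j ω * w l ω) := by ring
            _ = w j ω * w l ω := by rw [hsq]; ring
        simp_rw [this]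
        exact hpair j l (fun h => hc1 hik.symm h.symm)
      · by_cases hil : i = l
        · have : ∀ ω, (w i ω * w j ω) * (w k ω * w l ω) = w j ω * w k ω := by
            intro ω
            rw [← hil]
            calc (w i ω * w j ω) * (w k ω * w i ω) = (w i ω * w i ω) * (w j ω * w k ω) := by ring
              _ = w j ω * w k ω := by rw [hsq]; ring
          simp_rw [this]
          exact hpair j k (fun h => hc2 h.symm hil.symm)
        · by_cases hjk : j = k
          · have : ∀ ω, (w i ω * w j ω) * (w k ω * w l ω) = w i ω * w l ω := by
              intro ω
              rw [← hjk]
              calc (w i ω * w j ω) * (w j ω * w l ω) = (w j ω * w j ω) * (w i ω * w l ω) := by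
                    ring
                _ = w i ω * w l ω := by rw [hsq]; ring
            simp_rw [this]
            exact hpair i l hil
          · by_cases hjl : j = l
            · have : ∀ ω, (w i ω * w j ω) * (w k ω * w l ω) = w i ω * w k ω := by
                intro ω
                rw [← hjl]
                calc (w i ω * w j ω) * (w k ω * w j ω) = (w j ω * w j ω) * (w i ω * w k ω) := by
                      ring
                  _ = w i ω * w k ω := by rw [hsq]; ring
              simp_rw [this]
              exact hpair i k hik
            · have hind := hindep.indepFun_mul_mul hmeas i j k l hik hil hjk hjl
              have h := hind.integral_mul_eq_mul_integral (hg_int i j).aestronglyMeasurable (hg_int k l).aestronglyMeasurable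
              calc ∫ ω, (w i ω * w j ω) * (w k ω * w l ω)
                  = ∫ ω, ((w i * w j) * (w k * w l)) ω := rfl
                _ = (∫ ω, (w i * w j) ω) * ∫ ω, (w k * w l) ω := h
                _ = (∫ ω, w i ω * w j ω) * ∫ ω, w k ω * w l ω := rfl
                _ = 0 := by rw [hpair i j hij, hpair k l hkl]; ring
  -- Reduce the goal to ∫ S², then expand.
  have hgoal1 : ∫ ω, ((∑ i, ∑ j, w i ω * M i j * w j ω)
        - ∫ ω', (∑ i, ∑ j, w i ω' * M i j * w j ω')) ^ 2 = ∫ ω, (S ω) ^ 2 := by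
    congr 1
    funext ω
    rw [hEf, step0]
    ring
  rw [hgoal1]
  have hsq_expand : ∀ ω, (S ω) ^ 2
      = ∑ p ∈ P, ∑ q ∈ P, (M p.1 p.2 * M q.1 q.2)
          * ((w p.1 ω * w p.2 ω) * (w q.1 ω * w q.2 ω)) := by
    intro ω
    rw [hS, sq, Finset.sum_mul_sum]
    exact Finset.sum_congr rfl fun p _ => Finset.sum_congr rfl fun q _ => by ring
  simp_rw [hsq_expand]
  rw [integral_finset_sum _ fun p _ =>
    integrable_finset_sum _ fun q _ => (hg4_int p.1 p.2 q.1 q.2).const_mul _]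
  have : ∀ p ∈ P, ∫ ω, ∑ q ∈ P, (M p.1 p.2 * M q.1 q.2)
          * ((w p.1 ω * w p.2 ω) * (w q.1 ω * w q.2 ω)) = 2 * (M p.1 p.2) ^ 2 := by
    intro p hp
    rw [integral_finset_sum _ fun q _ => (hg4_int p.1 p.2 q.1 q.2).const_mul _]
    have hterm : ∀ q ∈ P, ∫ ω, (M p.1 p.2 * M q.1 q.2)
          * ((w p.1 ω * w p.2 ω) * (w q.1 ω * w q.2 ω))
        = if q = p ∨ q = Prod.swap p then M p.1 p.2 * M q.1 q.2 else 0 := by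
      intro q hq
      rw [integral_const_mul, hE4 p hp q hq]
      split_ifs <;> ring
    rw [Finset.sum_congr rfl hterm]
    have hswap_mem : Prod.swap p ∈ P := by
      have h := Finset.mem_offDiag.mp hp
      exact Finset.mem_offDiag.mpr ⟨Finset.mem_univ _, Finset.mem_univ _, fun h' => h.2.2 h'.symm⟩
    have hne : p ≠ Prod.swap p := by
      intro h
      have := (Finset.mem_offDiag.mp hp).2.2
      exact this (congrArg Prod.fst h)
    have hsub : ({p, Prod.swap p} : Finset (Fin m × Fin m)) ⊆ P := by
      intro q hq
      rcases Finset.mem_insert.mp hq with h | h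
      · exact h ▸ hp
      · exact (Finset.mem_singleton.mp h) ▸ hswap_mem
    rw [← Finset.sum_subset hsub (fun q _ hq' => by
      rw [if_neg]
      intro h
      rcases h with h | h
      · exact hq' (Finset.mem_insert.mpr (Or.inl h))
      · exact hq' (Finset.mem_insert.mpr (Or.inr (Finset.mem_singleton.mpr h))))]
    rw [Finset.sum_pair hne]
    rw [if_pos (Or.inl rfl), if_pos (Or.inr rfl)]
    have hsymm : M p.2 p.1 = M p.1 p.2 := hM.apply p.1 p.2
    simp only [Prod.fst_swap, Prod.snd_swap]
    rw [hsymm]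
    ring
  rw [Finset.sum_congr rfl this]
  -- Final algebra: ∑_{p ∈ offDiag} 2 M_p² = 2 (‖M‖² − ∑ diag)
  have hfull : (∑ i, ∑ j, (M i j) ^ 2)
      = (∑ j, (M j j) ^ 2) + ∑ p ∈ P, (M p.1 p.2) ^ 2 := by
    rw [← Finset.sum_product' (f := fun i j => (M i j) ^ 2), ← Finset.diag_union_offDiag,
      Finset.sum_union (Finset.disjoint_diag_offDiag _), Finset.sum_diag]
  rw [hfull, ← Finset.mul_sum]
  ring
end
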